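/- arXiv:1806.00108 — 3 statements merged into one kernel-verified Lean document; each statement's English description precedes it below -/
import Mathlib

section
/- The abelian group presented by generators x̄₀, x̄₁, ȳ₀, ȳ₁ with relations 2ȳ₀ = x̄₀ + x̄₁ and 2ȳ₁ = 2x̄₁ is isomorphic to ℤ² ⊕ ℤ/2ℤ. -/
/-!
Both relations lie in the kernel of `v ↦ (v₀ + v₁ + v₂ + v₃, v₁ + v₃ - v₀, v₃ mod 2)`, a surjection
onto `ℤ × ℤ × ℤ/2`. Conversely, if `v` is in the kernel then `v₃ = 2k` and the two integer
equations force `v = (-v₀) • r1 + k • r2`, so the kernel is exactly the relation subgroup.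
-/

/-- The free abelian group on the four generators `x̄₀, x̄₁, ȳ₀, ȳ₁`
(coordinates `0, 1, 2, 3`). -/
abbrev V : Type := Fin 4 → ℤ

/-- The relation `2ȳ₀ = x̄₀ + x̄₁`. -/
def r1 : V := 2 • Pi.single 2 1 - Pi.single 0 1 - Pi.single 1 1

/-- The relation `2ȳ₁ = 2x̄₁`. -/
def r2 : V := 2 • Pi.single 3 1 - 2 • Pi.single 1 1

/-- The subgroup of relations. -/
def R : AddSubgroup V := AddSubgroup.closure {r1, r2}

def toNormalForm : V →+ ℤ × ℤ × ZMod 2 where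
  toFun v := (v 0 + v 1 + v 2 + v 3, -v 0 + v 1 + v 3, ((v 3 : ℤ) : ZMod 2))
  map_zero' := by simp
  map_add' a b := by
    simp only [Pi.add_apply, Prod.mk_add_mk, Int.cast_add, Prod.mk.injEq]
    exact ⟨by ring, by ring, trivial⟩

lemma r1_eq : r1 = ![-1, -1, 2, 0] := by
  funext i; fin_cases i <;> rfl

lemma r2_eq : r2 = ![0, -2, 0, 2] := by
  funext i; fin_cases i <;> rfl

lemma r1_mem_R : r1 ∈ R := AddSubgroup.subset_closure (by simp)

lemma r2_mem_R : r2 ∈ R := AddSubgroup.subset_closure (by simp)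

lemma R_le_ker_toNormalForm : R ≤ toNormalForm.ker := by
  rw [R, AddSubgroup.closure_le]
  rintro x (rfl | rfl) <;> simp [toNormalForm, r1_eq, r2_eq]
  decide

lemma ker_toNormalForm_le_R : toNormalForm.ker ≤ R := by
  intro v hv
  have h : toNormalForm v = 0 := hv
  simp only [toNormalForm, AddMonoidHom.coe_mk, ZeroHom.coe_mk, Prod.mk_eq_zero,
    ZMod.intCast_zmod_eq_zero_iff_dvd, Nat.cast_ofNat] at h
  obtain ⟨hsum, hdiff, k, hk⟩ := h
  have hv : v = (-v 0) • r1 + k • r2 := by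
    funext i
    fin_cases i <;> simp [r1_eq, r2_eq] <;> omega
  rw [hv]
  exact R.add_mem (R.zsmul_mem r1_mem_R _) (R.zsmul_mem r2_mem_R _)

lemma ker_toNormalForm : toNormalForm.ker = R :=
  le_antisymm ker_toNormalForm_le_R R_le_ker_toNormalForm

lemma toNormalForm_surjective : Function.Surjective toNormalForm := by
  rintro ⟨m, n, t⟩
  refine ⟨![0, n - t.val, m - n, t.val], ?_⟩
  simp [toNormalForm]

theorem stmt_11 : Nonempty ((V ⧸ R) ≃+ (ℤ × ℤ × ZMod 2)) :=
  ⟨(QuotientAddGroup.quotientAddEquivOfEq ker_toNormalForm.symm).trans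
    (QuotientAddGroup.quotientKerEquivOfSurjective _ toNormalForm_surjective)⟩
end

section
/- In the group G with presentation ⟨x_i, y_i (i ≥ 0) | x_j x_i = x_i x_{j+1}, x_j y_i = y_i x_{j+1}, y_j x_i = x_i y_{j+1}, y_j y_i = y_i y_{j+1} (for 0 ≤ i < j), y_i² = x_i x_{i+1} (for i ≥ 0)⟩, every generator x_n with n ≥ 2 satisfies x_n = x_0^{-(n-1)} x_1 x_0^{n-1}, and similarly y_n = x_0^{-(n-1)} y_1 x_0^{n-1}; hence G is generated by x_0, x_1, y_0, y_1. -/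
/-! The relations with `i = 0` say that conjugation by `x 0` shifts the index of `x j` and `y j`
for `j ≥ 1`, so every generator of index at least `1` is a conjugate of `x 1` or `y 1` by a power
of `x 0`. -/

section ShiftByConjugation

variable {G : Type*} [Group G] {a : G} {z : ℕ → G}

theorem eq_inv_pow_mul_mul_pow_of_shift (h : ∀ j, 0 < j → z j * a = a * z (j + 1)) (n : ℕ) :
    z (n + 1) = a⁻¹ ^ n * z 1 * a ^ n := by
  induction n with
  | zero => simp
  | succ n ih =>
    have hconj : z (n + 2) = a⁻¹ * z (n + 1) * a := by
      rw [mul_assoc, h (n + 1) n.succ_pos, inv_mul_cancel_left]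
    rw [hconj, ih, pow_succ' a⁻¹, pow_succ a]
    simp only [mul_assoc]

theorem mem_of_shift (h : ∀ j, 0 < j → z j * a = a * z (j + 1)) {K : Subgroup G} (ha : a ∈ K)
    (h0 : z 0 ∈ K) (h1 : z 1 ∈ K) (n : ℕ) : z n ∈ K := by
  cases n with
  | zero => exact h0
  | succ n =>
    rw [eq_inv_pow_mul_mul_pow_of_shift h n]
    exact mul_mem (mul_mem (pow_mem (inv_mem ha) n) h1) (pow_mem ha n)

end ShiftByConjugation

theorem stmt_12_general (G : Type*) [Group G] (x y : ℕ → G)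
    (hxx : ∀ i j, i < j → x j * x i = x i * x (j + 1))
    (hyx : ∀ i j, i < j → y j * x i = x i * y (j + 1)) :
    (∀ n, 2 ≤ n →
      x n = (x 0)⁻¹ ^ (n - 1) * x 1 * x 0 ^ (n - 1) ∧
      y n = (x 0)⁻¹ ^ (n - 1) * y 1 * x 0 ^ (n - 1)) ∧
    (Subgroup.closure (Set.range x ∪ Set.range y) = ⊤ →
      Subgroup.closure {x 0, x 1, y 0, y 1} = ⊤) := by
  have hx : ∀ j, 0 < j → x j * x 0 = x 0 * x (j + 1) := hxx 0
  have hy : ∀ j, 0 < j → y j * x 0 = x 0 * y (j + 1) := hyx 0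
  refine ⟨fun n hn => ?_, fun htop => ?_⟩
  · obtain ⟨m, rfl⟩ : ∃ m, n = m + 1 := ⟨n - 1, by omega⟩
    exact ⟨eq_inv_pow_mul_mul_pow_of_shift hx m, eq_inv_pow_mul_mul_pow_of_shift hy m⟩
  · set K := Subgroup.closure ({x 0, x 1, y 0, y 1} : Set G)
    have hK : ∀ g ∈ ({x 0, x 1, y 0, y 1} : Set G), g ∈ K := fun _ hg => Subgroup.subset_closure hg
    rw [eq_top_iff, ← htop, Subgroup.closure_le]
    rintro _ (⟨n, rfl⟩ | ⟨n, rfl⟩)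
    · exact mem_of_shift hx (hK _ (by simp)) (hK _ (by simp)) (hK _ (by simp)) n
    · exact mem_of_shift hy (hK _ (by simp)) (hK _ (by simp)) (hK _ (by simp)) n

theorem stmt_12 (G : Type*) [Group G] (x y : ℕ → G)
    (hxx : ∀ i j, i < j → x j * x i = x i * x (j + 1))
    (hxy : ∀ i j, i < j → x j * y i = y i * x (j + 1))
    (hyx : ∀ i j, i < j → y j * x i = x i * y (j + 1))
    (hyy : ∀ i j, i < j → y j * y i = y i * y (j + 1))
    (hy2 : ∀ i, y i ^ 2 = x i * x (i + 1)) :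
    (∀ n, 2 ≤ n →
      x n = (x 0)⁻¹ ^ (n - 1) * x 1 * x 0 ^ (n - 1) ∧
      y n = (x 0)⁻¹ ^ (n - 1) * y 1 * x 0 ^ (n - 1)) ∧
    (Subgroup.closure (Set.range x ∪ Set.range y) = ⊤ →
      Subgroup.closure {x 0, x 1, y 0, y 1} = ⊤) :=
  stmt_12_general G x y hxx hyx
end

section
/- In the group G with the infinite presentation of F_τ, the relation x_i y_i x_{i+2} = y_i x_i x_{i+1} holds for every i ≥ 0; consequently, if u is a word in generators of index at least i+3 then x_i y_i x_{i+2} u x_{i+1}^{-1} x_i^{-1} = y_i u', where u' is obtained from u by lowering all subscripts by 2. -/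
/-! Since `y_i x_{i+2} = x_{i+1} y_i`, the left side `x_i y_i x_{i+2}` equals
`x_i x_{i+1} y_i = y_i ^ 3 = y_i x_i x_{i+1}`. Conjugation by `x_k` lowers every subscript
`≥ k + 2` by one, so conjugation by `x_i x_{i+1}` lowers subscripts `≥ i + 3` by two. -/

/-- Evaluation of a word: each letter is `(b, n, e)` where `b` selects the
generator family (`false` for `x`, `true` for `y`), `n` is the subscript and
`e` the (integer) exponent. -/
def weval {G : Type*} [Group G] (x y : ℕ → G) (w : List (Bool × ℕ × ℤ)) : G :=
  (w.map fun p => (if p.1 then y p.2.1 else x p.2.1) ^ p.2.2).prod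

section

variable {G : Type*} [Group G] {x y : ℕ → G}

theorem x_mul_y_mul_x_add_two (hxy : ∀ i j, i < j → x j * y i = y i * x (j + 1))
    (hy2 : ∀ i, y i ^ 2 = x i * x (i + 1)) (i : ℕ) :
    x i * y i * x (i + 2) = y i * x i * x (i + 1) :=
  calc x i * y i * x (i + 2) = x i * (x (i + 1) * y i) := by
        rw [mul_assoc, hxy i (i + 1) i.lt_succ_self]
    _ = y i ^ 2 * y i := by rw [hy2, mul_assoc]
    _ = y i * y i ^ 2 := ((Commute.self_pow (y i) 2).eq).symm
    _ = y i * x i * x (i + 1) := by rw [hy2, mul_assoc]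

theorem x_conj_weval (hxx : ∀ i j, i < j → x j * x i = x i * x (j + 1))
    (hyx : ∀ i j, i < j → y j * x i = x i * y (j + 1))
    {k : ℕ} {w : List (Bool × ℕ × ℤ)} (hw : ∀ p ∈ w, k + 2 ≤ p.2.1) :
    x k * weval x y w * (x k)⁻¹ = weval x y (w.map fun p => (p.1, p.2.1 - 1, p.2.2)) := by
  have hgen : ∀ n, k < n → ∀ b : Bool,
      x k * (if b then y (n + 1) else x (n + 1)) * (x k)⁻¹ = if b then y n else x n := by
    rintro n hn (_ | _)
    · exact (eq_mul_inv_of_mul_eq (hxx k n hn)).symm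
    · exact (eq_mul_inv_of_mul_eq (hyx k n hn)).symm
  rw [← MulAut.conj_apply, weval, map_list_prod, List.map_map, weval, List.map_map]
  refine congrArg _ (List.map_congr_left fun p hp => ?_)
  obtain ⟨n, hn⟩ : ∃ n, p.2.1 = n + 1 := ⟨p.2.1 - 1, by have := hw p hp; omega⟩
  simp only [Function.comp_apply, map_zpow, MulAut.conj_apply, hn, Nat.add_sub_cancel]
  rw [hgen n (by have := hw p hp; omega)]

theorem x_mul_x_succ_conj_weval (hxx : ∀ i j, i < j → x j * x i = x i * x (j + 1))
    (hyx : ∀ i j, i < j → y j * x i = x i * y (j + 1))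
    {i : ℕ} {w : List (Bool × ℕ × ℤ)} (hw : ∀ p ∈ w, i + 3 ≤ p.2.1) :
    x i * x (i + 1) * weval x y w * (x (i + 1))⁻¹ * (x i)⁻¹ =
      weval x y (w.map fun p => (p.1, p.2.1 - 2, p.2.2)) := by
  have hw' : ∀ p ∈ w.map fun p => (p.1, p.2.1 - 1, p.2.2), i + 2 ≤ p.2.1 := by
    simp only [List.mem_map]
    rintro _ ⟨p, hp, rfl⟩
    have := hw p hp
    dsimp only; omega
  rw [mul_assoc (x i), mul_assoc (x i),
    x_conj_weval hxx hyx (fun p hp => by have := hw p hp; omega),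
    x_conj_weval hxx hyx hw', List.map_map]
  -- `n - 1 - 1` and `n - 2` agree definitionally
  rfl

end

theorem stmt_13_general (G : Type*) [Group G] (x y : ℕ → G)
    (hxx : ∀ i j, i < j → x j * x i = x i * x (j + 1))
    (hxy : ∀ i j, i < j → x j * y i = y i * x (j + 1))
    (hyx : ∀ i j, i < j → y j * x i = x i * y (j + 1))
    (hy2 : ∀ i, y i ^ 2 = x i * x (i + 1)) :
    (∀ i, x i * y i * x (i + 2) = y i * x i * x (i + 1)) ∧
    (∀ i, ∀ w : List (Bool × ℕ × ℤ), (∀ p ∈ w, i + 3 ≤ p.2.1) →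
      x i * y i * x (i + 2) * weval x y w * (x (i + 1))⁻¹ * (x i)⁻¹ =
        y i * weval x y (w.map fun p => (p.1, p.2.1 - 2, p.2.2))) := by
  refine ⟨x_mul_y_mul_x_add_two hxy hy2, fun i w hw => ?_⟩
  rw [x_mul_y_mul_x_add_two hxy hy2, ← x_mul_x_succ_conj_weval hxx hyx hw]
  group

theorem stmt_13 (G : Type*) [Group G] (x y : ℕ → G)
    (hxx : ∀ i j, i < j → x j * x i = x i * x (j + 1))
    (hxy : ∀ i j, i < j → x j * y i = y i * x (j + 1))
    (hyx : ∀ i j, i < j → y j * x i = x i * y (j + 1))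
    (hyy : ∀ i j, i < j → y j * y i = y i * y (j + 1))
    (hy2 : ∀ i, y i ^ 2 = x i * x (i + 1)) :
    (∀ i, x i * y i * x (i + 2) = y i * x i * x (i + 1)) ∧
    (∀ i, ∀ w : List (Bool × ℕ × ℤ), (∀ p ∈ w, i + 3 ≤ p.2.1) →
      x i * y i * x (i + 2) * weval x y w * (x (i + 1))⁻¹ * (x i)⁻¹ =
        y i * weval x y (w.map fun p => (p.1, p.2.1 - 2, p.2.2))) :=
  stmt_13_general G x y hxx hxy hyx hy2
end
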